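/- Let f be a polynomial of total degree t in n variables, written f = Σ_{j=0}^t f_j with each f_j homogeneous of degree j. Then ∫_Δ f(x) dx = (1/n!) · (f̂₀ + Σ_{j=1}^t f̂_j(ξ_j)), where ξ_j = e/((n+1)⋯(n+j))^{1/j} and f̂_j is the Bombieri polynomial of f_j. -/

import Mathlib

/-!
Integrating out the first coordinate turns the integral of a monomial over the dilated simplex
`r • Δ` in dimension `n + 1` into a Beta integral of the same integral in dimension `n`; by
induction this gives Dirichlet's formula `∫_{r • Δ} x^α = α! r^(n + |α|) / (n + |α|)!`.
So a form `f_j` of degree `j` integrates over `Δ` to `f̂_j(e) / (n + j)!`, and as `f̂_j` is again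
a form of degree `j`, `f̂_j(ξ_j) = f̂_j(e) / ((n + 1) ⋯ (n + j)) = n! f̂_j(e) / (n + j)!`.
-/

open MeasureTheory Finset

noncomputable def bombieriEval {n : ℕ} (p : MvPolynomial (Fin n) ℝ) (x : Fin n → ℝ) : ℝ :=
  ∑ α ∈ p.support, (∏ i, (Nat.factorial (α i) : ℝ)) * p.coeff α * ∏ i, x i ^ α i

open scoped Nat

theorem Nat.cast_factorial_mul_prod_range_add {R : Type*} [CommSemiring R] (n j : ℕ) :
    (n ! : R) * ∏ k ∈ range j, (n + 1 + k : R) = (n + j)! := by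
  rw [← Nat.factorial_mul_ascFactorial, Nat.ascFactorial_eq_prod_range]
  push_cast
  rfl

theorem integral_pow_mul_sub_pow (a b : ℕ) {r : ℝ} (hr : 0 ≤ r) :
    ∫ x in (0 : ℝ)..r, x ^ a * (r - x) ^ b = a ! * b ! / (a + b + 1)! * r ^ (a + b + 1) := by
  rcases hr.eq_or_lt with rfl | hr
  · simp
  have hbeta := Complex.betaIntegral_scaled (a + 1) (b + 1) hr
  have hu : 0 < ((a : ℂ) + 1).re := by
    simp only [Complex.add_re, Complex.natCast_re, Complex.one_re]
    positivity
  rw [Complex.betaIntegral_eval_nat_add_one_right hu] at hbeta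
  apply Complex.ofReal_injective
  rw [← intervalIntegral.integral_ofReal]
  push_cast at hbeta ⊢
  simp only [add_sub_cancel_right, Complex.cpow_natCast] at hbeta
  have hexp : (a : ℂ) + 1 + (b + 1) - 1 = (a + b + 1 : ℕ) := by push_cast; ring
  rw [hbeta, hexp, Complex.cpow_natCast, add_assoc a b 1,
    ← Nat.cast_factorial_mul_prod_range_add (R := ℂ) a (b + 1)]
  have hprod : (∏ j ∈ range (b + 1), ((a : ℂ) + 1 + j)) ≠ 0 :=
    prod_ne_zero_iff.2 fun j _ => by norm_cast; omega
  field_simp [Nat.factorial_ne_zero]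

def simplex (n : ℕ) (r : ℝ) : Set (Fin n → ℝ) :=
  {x | (∀ i, 0 ≤ x i) ∧ ∑ i, x i ≤ r}

theorem isCompact_simplex (n : ℕ) (r : ℝ) : IsCompact (simplex n r) := by
  -- `∀ i, 0 ≤ x i` is `x ∈ Set.Ici 0` for the product order
  have hclosed : IsClosed (simplex n r) := isClosed_Ici.inter <|
    isClosed_le (continuous_finsetSum _ fun i _ => continuous_apply i) continuous_const
  refine (isCompact_Icc (b := fun _ => r)).of_isClosed_subset hclosed
    fun x ⟨hx, hsum⟩ => ⟨hx, fun i => ?_⟩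
  exact (single_le_sum (fun j _ => hx j) (mem_univ i)).trans hsum

theorem measurableSet_simplex (n : ℕ) (r : ℝ) : MeasurableSet (simplex n r) :=
  (isCompact_simplex n r).isClosed.measurableSet

theorem Continuous.integrableOn_simplex {E : Type*} [NormedAddCommGroup E] {n : ℕ} {r : ℝ}
    {F : (Fin n → ℝ) → E} (hF : Continuous F) : IntegrableOn F (simplex n r) :=
  hF.continuousOn.integrableOn_compact (isCompact_simplex n r)

theorem simplex_eq_empty {n : ℕ} {r : ℝ} (hr : r < 0) : simplex n r = ∅ :=
  Set.eq_empty_of_forall_notMem fun _ ⟨hx, hsum⟩ =>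
    hr.not_ge ((sum_nonneg fun i _ => hx i).trans hsum)

theorem cons_mem_simplex_iff {n : ℕ} {r a : ℝ} {b : Fin n → ℝ} :
    Fin.cons a b ∈ simplex (n + 1) r ↔ 0 ≤ a ∧ b ∈ simplex n (r - a) := by
  simp only [simplex, Set.mem_ofPred_eq, Fin.forall_fin_succ, Fin.cons_zero, Fin.cons_succ,
    Fin.sum_univ_succ, le_sub_iff_add_le', and_assoc]

theorem integral_fin_cons {E : Type*} [NormedAddCommGroup E] [NormedSpace ℝ E] {n : ℕ}
    {F : (Fin (n + 1) → ℝ) → E} (hF : Integrable F) :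
    ∫ x, F x = ∫ a, ∫ b, F (Fin.cons a b) := by
  have hmp := (volume_preserving_piFinSuccAbove (fun _ : Fin (n + 1) => ℝ) 0).symm
  have hcons : ∀ y : ℝ × (Fin n → ℝ),
      (MeasurableEquiv.piFinSuccAbove (fun _ => ℝ) 0).symm y = Fin.cons y.1 y.2 :=
    fun y => Fin.insertNth_zero' y.1 y.2
  have hint : Integrable fun y : ℝ × (Fin n → ℝ) => F (Fin.cons y.1 y.2) := by
    simpa only [Function.comp_def, hcons] using
      (hmp.integrable_comp_emb (MeasurableEquiv.measurableEmbedding _)).2 hF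
  rw [← hmp.integral_comp']
  simp only [hcons]
  exact integral_prod _ hint

theorem setIntegral_simplex_succ {E : Type*} [NormedAddCommGroup E] [NormedSpace ℝ E] {n : ℕ}
    {r : ℝ} {F : (Fin (n + 1) → ℝ) → E} (hF : IntegrableOn F (simplex (n + 1) r)) :
    ∫ x in simplex (n + 1) r, F x =
      ∫ a in Set.Icc 0 r, ∫ b in simplex n (r - a), F (Fin.cons a b) := by
  rw [← integral_indicator (measurableSet_simplex _ _),
    integral_fin_cons (hF.integrable_indicator (measurableSet_simplex _ _)),
    ← integral_indicator measurableSet_Icc]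
  congr 1 with a
  by_cases ha : a ∈ Set.Icc 0 r
  · rw [Set.indicator_of_mem ha, ← integral_indicator (measurableSet_simplex _ _)]
    congr 1 with b
    have hmem : Fin.cons a b ∈ simplex (n + 1) r ↔ b ∈ simplex n (r - a) := by
      rw [cons_mem_simplex_iff, and_iff_right ha.1]
    by_cases hb : b ∈ simplex n (r - a)
    · rw [Set.indicator_of_mem hb, Set.indicator_of_mem (hmem.2 hb)]
    · rw [Set.indicator_of_notMem hb, Set.indicator_of_notMem (mt hmem.1 hb)]
  · rw [Set.indicator_of_notMem ha]
    refine integral_eq_zero_of_ae (.of_forall fun b => Set.indicator_of_notMem ?_ F)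
    rw [cons_mem_simplex_iff]
    rintro ⟨ha₀, hb⟩
    rw [simplex_eq_empty (sub_neg.2 (lt_of_not_ge fun har => ha ⟨ha₀, har⟩))] at hb
    exact hb

theorem setIntegral_simplex_prod_pow (n : ℕ) (α : Fin n → ℕ) {r : ℝ} (hr : 0 ≤ r) :
    ∫ x in simplex n r, ∏ i, x i ^ α i =
      (∏ i, (α i)! : ℝ) * r ^ (n + ∑ i, α i) / (n + ∑ i, α i)! := by
  induction n generalizing r with
  | zero => simp [simplex, hr, Measure.real, volume_pi]
  | succ n ih =>
    set m := n + ∑ j : Fin n, α j.succ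
    have hint : IntegrableOn (fun x : Fin (n + 1) → ℝ => ∏ i, x i ^ α i)
        (simplex (n + 1) r) :=
      Continuous.integrableOn_simplex (by fun_prop)
    have hslice : ∀ a ∈ Set.Icc 0 r,
        ∫ b in simplex n (r - a), ∏ i, (Fin.cons a b : Fin (n + 1) → ℝ) i ^ α i =
          (∏ j : Fin n, (α j.succ)! : ℝ) / m ! * (a ^ α 0 * (r - a) ^ m) := by
      intro a ha
      simp only [Fin.prod_univ_succ, Fin.cons_zero, Fin.cons_succ]
      rw [integral_const_mul, ih _ (sub_nonneg.2 ha.2)]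
      ring
    rw [setIntegral_simplex_succ hint, setIntegral_congr_fun measurableSet_Icc hslice,
      integral_const_mul, integral_Icc_eq_integral_Ioc, ← intervalIntegral.integral_of_le hr,
      integral_pow_mul_sub_pow _ _ hr, Fin.prod_univ_succ, Fin.sum_univ_succ,
      show α 0 + m + 1 = n + 1 + (α 0 + ∑ j : Fin n, α j.succ) by omega]
    field_simp [Nat.factorial_ne_zero]

theorem MvPolynomial.IsHomogeneous.sum_eq_of_mem_support {σ R : Type*} [Fintype σ]
    [CommSemiring R] {p : MvPolynomial σ R} {j : ℕ} (hp : p.IsHomogeneous j) {α : σ →₀ ℕ}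
    (hα : α ∈ p.support) : ∑ i, α i = j := by
  rw [← Finsupp.degree_eq_sum, Finsupp.degree_eq_weight_one]
  exact hp (MvPolynomial.mem_support_iff.1 hα)

theorem bombieriEval_zero {n : ℕ} (p : MvPolynomial (Fin n) ℝ) :
    bombieriEval p 0 = p.coeff 0 := by
  rw [bombieriEval, sum_eq_single 0]
  · simp
  · intro α _ hα
    obtain ⟨i, hi⟩ := Finsupp.ne_iff.1 hα
    exact mul_eq_zero_of_right _ (prod_eq_zero (mem_univ i) (by simpa using hi))
  · intro h
    rw [MvPolynomial.notMem_support_iff.1 h, mul_zero, zero_mul]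

theorem bombieriEval_smul_of_isHomogeneous {n j : ℕ} {p : MvPolynomial (Fin n) ℝ}
    (hp : p.IsHomogeneous j) (c : ℝ) (x : Fin n → ℝ) :
    bombieriEval p (c • x) = c ^ j * bombieriEval p x := by
  rw [bombieriEval, bombieriEval, mul_sum]
  refine sum_congr rfl fun α hα => ?_
  simp only [Pi.smul_apply, smul_eq_mul, mul_pow, prod_mul_distrib, prod_pow_eq_pow_sum,
    hp.sum_eq_of_mem_support hα]
  ring

theorem bombieriEval_of_isHomogeneous_zero {n : ℕ} {p : MvPolynomial (Fin n) ℝ}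
    (hp : p.IsHomogeneous 0) (x : Fin n → ℝ) : bombieriEval p x = p.coeff 0 := by
  have h := bombieriEval_smul_of_isHomogeneous hp 0 x
  rwa [zero_smul, pow_zero, one_mul, bombieriEval_zero, eq_comm] at h

theorem bombieriEval_const_of_isHomogeneous {n j : ℕ} {p : MvPolynomial (Fin n) ℝ}
    (hp : p.IsHomogeneous j) (c : ℝ) :
    bombieriEval p (fun _ => c) = c ^ j * bombieriEval p 1 := by
  rw [← bombieriEval_smul_of_isHomogeneous hp]
  exact congrArg _ (funext fun _ => (mul_one c).symm)

theorem setIntegral_simplex_eval_of_isHomogeneous {n j : ℕ} {p : MvPolynomial (Fin n) ℝ}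
    (hp : p.IsHomogeneous j) {r : ℝ} (hr : 0 ≤ r) :
    ∫ x in simplex n r, MvPolynomial.eval x p = bombieriEval p 1 * r ^ (n + j) / (n + j)! := by
  simp only [MvPolynomial.eval_eq', bombieriEval, Pi.one_apply, one_pow, prod_const_one, mul_one]
  rw [integral_finsetSum _ fun α _ => Continuous.integrableOn_simplex (by fun_prop), sum_mul,
    sum_div]
  refine sum_congr rfl fun α hα => ?_
  rw [integral_const_mul, setIntegral_simplex_prod_pow _ _ hr, hp.sum_eq_of_mem_support hα]
  ring

theorem integral_poly_canonical_simplex (n t : ℕ) (f : MvPolynomial (Fin n) ℝ)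
    (g : ℕ → MvPolynomial (Fin n) ℝ) (hg : ∀ j, (g j).IsHomogeneous j)
    (hf : f = ∑ j ∈ Finset.range (t + 1), g j) :
    ∫ x in {x : Fin n → ℝ | (∀ i, 0 ≤ x i) ∧ ∑ i, x i ≤ 1}, MvPolynomial.eval x f =
      (1 / (Nat.factorial n : ℝ)) *
        (MvPolynomial.coeff 0 (g 0) +
          ∑ j ∈ Finset.Icc 1 t,
            bombieriEval (g j)
              (fun _ => ((∏ k ∈ Finset.range j, (n + 1 + k : ℝ)) ^ ((1 : ℝ) / j))⁻¹)) := by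
  have hterm (j : ℕ) : ∫ x in simplex n 1, MvPolynomial.eval x (g j) =
      bombieriEval (g j) 1 / (n + j)! := by
    simpa using setIntegral_simplex_eval_of_isHomogeneous (hg j) zero_le_one
  change ∫ x in simplex n 1, _ = _
  rw [hf]
  simp_rw [map_sum]
  rw [integral_finsetSum _ fun j _ => (MvPolynomial.continuous_eval _).integrableOn_simplex]
  simp_rw [hterm]
  rw [range_eq_Ico, sum_eq_sum_Ico_succ_bot (Nat.succ_pos t), zero_add, Nat.succ_eq_add_one,
    Ico_add_one_right_eq_Icc, ← bombieriEval_of_isHomogeneous_zero (hg 0) 1, mul_add, mul_sum]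
  congr 1
  · simp [div_eq_inv_mul]
  refine sum_congr rfl fun j hj => ?_
  have hP : 0 ≤ ∏ k ∈ range j, (n + 1 + k : ℝ) := prod_nonneg fun k _ => by positivity
  have hj0 : j ≠ 0 := Nat.one_le_iff_ne_zero.1 (mem_Icc.1 hj).1
  rw [bombieriEval_const_of_isHomogeneous (hg j), inv_pow, one_div (j : ℝ),
    Real.rpow_inv_natCast_pow hP hj0, ← Nat.cast_factorial_mul_prod_range_add]
  field_simp
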